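/- Let a < b be real numbers and let f : [a,b] → ℝ be twice continuously differentiable on (a,b) with f'' ∈ L²[a,b], and assume f is symmetric about the line x = (a+b)/2, i.e., f(a+b−x) = f(x) for all x ∈ [a,b]. Then for all x ∈ [a, (a+b)/2], |f(x) − (1/(b−a)) ∫_a^b f(t) dt| ≤ ((b−a)^{1/2}/π) · [ (b−a)²/48 + (x − (3a+b)/4)² ]^{1/2} · ‖f''‖₂. -/

import Mathlib

/-!
Integrating by parts against the piecewise linear kernel `P = companionKernel a b x` (slope `1`,
zero at `a` and `b`, jumps at `x` and `a + b - x`) gives `∫ P f' = (b - a) f x - ∫ f` for symmetric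
`f`, and `∫ P² = (b - a) ((b - a)² / 48 + (x - (3a + b) / 4)²)`, so Cauchy–Schwarz bounds the
left-hand side by `‖P‖₂ ‖f'‖₂`. Symmetry forces `f' ((a + b) / 2) = 0`, and on each half of `[a, b]`
the sharp Wirtinger inequality `∫ g² ≤ (2L / π)² ∫ g'²` (for `g` vanishing at one end of an interval
of length `L`) gives `‖f'‖₂ ≤ (b - a) / π · ‖f''‖₂`.

Wirtinger's inequality follows from `(g' - φ g)² = g'² - k² g² - (φ g²)'`, where
`φ t = k tan (k (d - t))` solves `φ' + φ² = -k²` and vanishes at the free end `d`, for every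
`k < π / (2L)`; then let `k → π / (2L)`. As `f''` is only known to be square integrable on the open
interval, `f'` is first replaced by its continuous extension to `[a, b]`.
-/

open MeasureTheory Set Filter Topology Real

section Regularity

variable {g g' : ℝ → ℝ} {a b : ℝ}

theorem aestronglyMeasurable_of_hasDerivAt_Ioo (hg : ∀ t ∈ Ioo a b, HasDerivAt g (g' t) t) :
    AEStronglyMeasurable g' (volume.restrict (Ioc a b)) := by
  rw [← Measure.restrict_congr_set Ioo_ae_eq_Ioc]
  refine (measurable_deriv g).aestronglyMeasurable.congr ?_
  filter_upwards [ae_restrict_mem measurableSet_Ioo] with t ht using (hg t ht).deriv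

theorem intervalIntegrable_of_hasDerivAt_Ioo_of_sq (hab : a ≤ b)
    (hg : ∀ t ∈ Ioo a b, HasDerivAt g (g' t) t)
    (hg'2 : IntervalIntegrable (fun t => g' t ^ 2) volume a b) :
    IntervalIntegrable g' volume a b := by
  rw [intervalIntegrable_iff_integrableOn_Ioc_of_le hab] at hg'2 ⊢
  exact ((memLp_two_iff_integrable_sq (aestronglyMeasurable_of_hasDerivAt_Ioo hg)).2
    hg'2).integrable one_le_two

theorem exists_continuousOn_Icc_eqOn_Ioo_of_hasDerivAt (hab : a < b)
    (hg : ∀ t ∈ Ioo a b, HasDerivAt g (g' t) t) (hg' : IntervalIntegrable g' volume a b) :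
    ∃ G : ℝ → ℝ, ContinuousOn G (Icc a b) ∧ EqOn G g (Ioo a b) := by
  obtain ⟨m, hm⟩ : (Ioo a b).Nonempty := nonempty_Ioo.2 hab
  refine ⟨fun t => g m + ∫ s in m..t, g' s, ?_, fun t ht => ?_⟩
  · rw [← uIcc_of_le hab.le]
    exact continuousOn_const.add (intervalIntegral.continuousOn_primitive_interval' hg'
      (Icc_subset_uIcc (Ioo_subset_Icc_self hm)))
  · have hsub : uIcc m t ⊆ Ioo a b := ordConnected_Ioo.uIcc_subset hm ht
    have hint : IntervalIntegrable g' volume m t :=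
      hg'.mono_set (by rw [uIcc_of_le hab.le]; exact hsub.trans Ioo_subset_Icc_self)
    dsimp only
    rw [intervalIntegral.integral_eq_sub_of_hasDerivAt (fun s hs => hg s (hsub hs)) hint]
    ring

end Regularity

theorem HasDerivAt.eq_zero_of_eventually_comp_const_sub {f : ℝ → ℝ} {s f' : ℝ}
    (hf : HasDerivAt f f' (s / 2)) (hsym : ∀ᶠ t in 𝓝 (s / 2), f (s - t) = f t) : f' = 0 := by
  have hrefl : HasDerivAt (fun t => f (s - t)) (-f') (s / 2) :=
    HasDerivAt.comp_const_sub s (s / 2) (by rwa [show s - s / 2 = s / 2 by ring])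
  linarith [(hrefl.congr_of_eventuallyEq (hsym.mono fun t ht => ht.symm)).unique hf]

theorem sq_integral_mul_le_mul_integral_sq {α : Type*} [MeasurableSpace α] {μ : Measure α}
    {u v : α → ℝ}
    (hu : Integrable (fun t => u t ^ 2) μ) (hv : Integrable (fun t => v t ^ 2) μ)
    (huv : Integrable (fun t => u t * v t) μ) :
    (∫ t, u t * v t ∂μ) ^ 2 ≤ (∫ t, u t ^ 2 ∂μ) * ∫ t, v t ^ 2 ∂μ := by
  have hquad : ∀ s : ℝ, 0 ≤ (∫ t, u t ^ 2 ∂μ) * (s * s) + 2 * (∫ t, u t * v t ∂μ) * s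
      + ∫ t, v t ^ 2 ∂μ := fun s => by
    have hexp : ∀ t, (s * u t + v t) ^ 2 = s ^ 2 * u t ^ 2 + 2 * s * (u t * v t) + v t ^ 2 :=
      fun t => by ring
    have : 0 ≤ ∫ t, (s * u t + v t) ^ 2 ∂μ := integral_nonneg fun t => sq_nonneg _
    simp only [hexp] at this
    rw [integral_add (f := fun t => s ^ 2 * u t ^ 2 + 2 * s * (u t * v t))
      ((hu.const_mul _).add (huv.const_mul _)) hv, integral_add (hu.const_mul _)
      (huv.const_mul _), integral_const_mul, integral_const_mul] at this
    linarith
  have := discrim_le_zero hquad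
  rw [discrim] at this
  nlinarith

section Wirtinger

variable {g g' : ℝ → ℝ} {c d : ℝ}

theorem sq_mul_integral_sq_le_of_left_eq_zero (hcd : c ≤ d) {k : ℝ} (hk : 0 ≤ k)
    (hkd : k * (d - c) < π / 2) (hg : ContinuousOn g (Icc c d))
    (hg' : ∀ t ∈ Ioo c d, HasDerivAt g (g' t) t)
    (hg'2 : IntervalIntegrable (fun t => g' t ^ 2) volume c d) (hgc : g c = 0) :
    k ^ 2 * ∫ t in c..d, g t ^ 2 ≤ ∫ t in c..d, g' t ^ 2 := by
  set φ : ℝ → ℝ := fun t => k * tan (k * (d - t))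
  have hcos : ∀ t ∈ Icc c d, cos (k * (d - t)) ≠ 0 := fun t ht => by
    refine (cos_pos_of_mem_Ioo ⟨?_, ?_⟩).ne'
    · nlinarith [ht.2, pi_pos]
    · nlinarith [ht.1]
  have hφ : ∀ t ∈ Icc c d, HasDerivAt φ (-(k ^ 2 + φ t ^ 2)) t := fun t ht => by
    have hinner : HasDerivAt (fun s => k * (d - s)) (-k) t := by
      simpa using ((hasDerivAt_id t).const_sub d).const_mul k
    refine (((hasDerivAt_tan (hcos t ht)).comp t hinner).const_mul k).congr_deriv ?_
    have hcos_ne := hcos t ht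
    simp only [φ, tan_eq_sin_div_cos]
    field_simp
    linear_combination k ^ 2 * sin_sq_add_cos_sq (k * (d - t))
  have hφc : ContinuousOn φ (Icc c d) := fun t ht => (hφ t ht).continuousAt.continuousWithinAt
  set H' : ℝ → ℝ := fun t => -(k ^ 2 + φ t ^ 2) * g t ^ 2 + 2 * φ t * g t * g' t
  have hH'int : IntervalIntegrable H' volume c d := by
    have hcont : ContinuousOn (fun t => -(k ^ 2 + φ t ^ 2) * g t ^ 2) (uIcc c d) := by
      rw [uIcc_of_le hcd]; fun_prop
    have hcont' : ContinuousOn (fun t => 2 * φ t * g t) (uIcc c d) := by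
      rw [uIcc_of_le hcd]; fun_prop
    exact hcont.intervalIntegrable.add
      ((intervalIntegrable_of_hasDerivAt_Ioo_of_sq hcd hg' hg'2).continuousOn_mul hcont')
  have hH' : ∫ t in c..d, H' t = 0 := by
    rw [intervalIntegral.integral_eq_sub_of_hasDeriv_right_of_le (f := fun t => φ t * g t ^ 2)
      hcd (hφc.mul (hg.pow 2)) (fun t ht => ?_) hH'int]
    · simp [φ, hgc]
    · refine (((hφ t (Ioo_subset_Icc_self ht)).mul ((hg' t ht).pow 2)).congr_deriv
        ?_).hasDerivWithinAt
      simp only [H', Pi.pow_apply]; ring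
  have hg2 : IntervalIntegrable (fun t => k ^ 2 * g t ^ 2) volume c d := by
    apply ContinuousOn.intervalIntegrable; rw [uIcc_of_le hcd]; fun_prop
  have hsplit : ∫ t in c..d, (g' t ^ 2 - k ^ 2 * g t ^ 2 - H' t)
      = (∫ t in c..d, g' t ^ 2) - k ^ 2 * ∫ t in c..d, g t ^ 2 := by
    rw [intervalIntegral.integral_sub (hg'2.sub hg2) hH'int, intervalIntegral.integral_sub hg'2 hg2,
      intervalIntegral.integral_const_mul, hH', sub_zero]
  have hnonneg : 0 ≤ ∫ t in c..d, (g' t ^ 2 - k ^ 2 * g t ^ 2 - H' t) :=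
    intervalIntegral.integral_nonneg hcd fun t _ => by
      have : g' t ^ 2 - k ^ 2 * g t ^ 2 - H' t = (g' t - φ t * g t) ^ 2 := by simp only [H']; ring
      rw [this]; positivity
  linarith

theorem integral_sq_le_of_left_eq_zero (hcd : c < d) (hg : ContinuousOn g (Icc c d))
    (hg' : ∀ t ∈ Ioo c d, HasDerivAt g (g' t) t)
    (hg'2 : IntervalIntegrable (fun t => g' t ^ 2) volume c d) (hgc : g c = 0) :
    ∫ t in c..d, g t ^ 2 ≤ (2 * (d - c) / π) ^ 2 * ∫ t in c..d, g' t ^ 2 := by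
  have hdc : d - c ≠ 0 := by linarith
  set k₀ := π / (2 * (d - c))
  have hk₀ : 0 < k₀ := div_pos pi_pos (by linarith)
  have hlim : Tendsto (fun k => k ^ 2 * ∫ t in c..d, g t ^ 2) (𝓝[<] k₀)
      (𝓝 (k₀ ^ 2 * ∫ t in c..d, g t ^ 2)) :=
    ((continuous_pow 2).mul continuous_const).continuousAt.tendsto.mono_left nhdsWithin_le_nhds
  have hle : k₀ ^ 2 * ∫ t in c..d, g t ^ 2 ≤ ∫ t in c..d, g' t ^ 2 := by
    refine le_of_tendsto hlim (eventually_of_mem (Ioo_mem_nhdsLT hk₀) fun k hk => ?_)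
    refine sq_mul_integral_sq_le_of_left_eq_zero hcd.le hk.1.le ?_ hg hg' hg'2 hgc
    calc k * (d - c) < k₀ * (d - c) := mul_lt_mul_of_pos_right hk.2 (by linarith)
      _ = π / 2 := by simp only [k₀]; field_simp
  have hinv : (2 * (d - c) / π) ^ 2 = (k₀ ^ 2)⁻¹ := by simp only [k₀]; field_simp
  rw [hinv, ← div_eq_inv_mul, le_div_iff₀ (by positivity)]
  linarith

theorem integral_sq_le_of_right_eq_zero (hcd : c < d) (hg : ContinuousOn g (Icc c d))
    (hg' : ∀ t ∈ Ioo c d, HasDerivAt g (g' t) t)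
    (hg'2 : IntervalIntegrable (fun t => g' t ^ 2) volume c d) (hgd : g d = 0) :
    ∫ t in c..d, g t ^ 2 ≤ (2 * (d - c) / π) ^ 2 * ∫ t in c..d, g' t ^ 2 := by
  have hrefl : MapsTo (fun t => c + d - t) (Ioo c d) (Ioo c d) := fun t ht =>
    ⟨by linarith [ht.2], by linarith [ht.1]⟩
  have hreflIcc : MapsTo (fun t => c + d - t) (Icc c d) (Icc c d) := fun t ht =>
    ⟨by linarith [ht.2], by linarith [ht.1]⟩
  have hrefl2 : IntervalIntegrable (fun t => (-g' (c + d - t)) ^ 2) volume c d := by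
    simpa [neg_sq] using (hg'2.comp_sub_left (c + d)).symm
  have := integral_sq_le_of_left_eq_zero hcd (hg.comp (by fun_prop) hreflIcc)
    (fun t ht => (hg' _ (hrefl ht)).comp_const_sub (c + d) t) hrefl2 (by simpa using hgd)
  simpa [neg_sq, intervalIntegral.integral_comp_sub_left (fun t => g t ^ 2),
    intervalIntegral.integral_comp_sub_left (fun t => g' t ^ 2)] using this

theorem integral_sq_le_of_midpoint_eq_zero (hcd : c < d) (hg : ContinuousOn g (Icc c d))
    (hg' : ∀ t ∈ Ioo c d, HasDerivAt g (g' t) t)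
    (hg'2 : IntervalIntegrable (fun t => g' t ^ 2) volume c d) (hgm : g ((c + d) / 2) = 0) :
    ∫ t in c..d, g t ^ 2 ≤ ((d - c) / π) ^ 2 * ∫ t in c..d, g' t ^ 2 := by
  set m := (c + d) / 2
  have hcm : c < m := by simp only [m]; linarith
  have hmd : m < d := by simp only [m]; linarith
  have hm : m ∈ uIcc c d := by rw [uIcc_of_le hcd.le]; exact ⟨hcm.le, hmd.le⟩
  have hsub₁ : uIcc c m ⊆ uIcc c d := uIcc_subset_uIcc_left hm
  have hsub₂ : uIcc m d ⊆ uIcc c d := uIcc_subset_uIcc_right hm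
  have hg2 : IntervalIntegrable (fun t => g t ^ 2) volume c d := by
    apply ContinuousOn.intervalIntegrable; rw [uIcc_of_le hcd.le]; fun_prop
  have hleft := integral_sq_le_of_right_eq_zero hcm (hg.mono (Icc_subset_Icc_right hmd.le))
    (fun t ht => hg' t ⟨ht.1, ht.2.trans hmd⟩) (hg'2.mono_set hsub₁) hgm
  have hright := integral_sq_le_of_left_eq_zero hmd (hg.mono (Icc_subset_Icc_left hcm.le))
    (fun t ht => hg' t ⟨hcm.trans ht.1, ht.2⟩) (hg'2.mono_set hsub₂) hgm
  rw [show 2 * (m - c) = d - c by ring] at hleft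
  rw [show 2 * (d - m) = d - c by ring] at hright
  rw [← intervalIntegral.integral_add_adjacent_intervals (hg2.mono_set hsub₁) (hg2.mono_set hsub₂),
    ← intervalIntegral.integral_add_adjacent_intervals (hg'2.mono_set hsub₁) (hg'2.mono_set hsub₂)]
  linarith

end Wirtinger

theorem integral_sub_mul_deriv_eq {f f' : ℝ → ℝ} {c e : ℝ} (w : ℝ) (hce : c ≤ e)
    (hf : ContinuousOn f (Icc c e)) (hf' : ∀ t ∈ Ioo c e, HasDerivAt f (f' t) t)
    (hf'i : IntervalIntegrable f' volume c e) :
    ∫ t in c..e, (t - w) * f' t = (e - w) * f e - (c - w) * f c - ∫ t in c..e, f t := by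
  rw [← uIcc_of_le hce] at hf
  have := intervalIntegral.integral_mul_deriv_eq_deriv_mul_of_hasDerivAt (u' := fun _ => 1)
    (by fun_prop) hf (fun t _ => (hasDerivAt_id t).sub_const w)
    (by rwa [min_eq_left hce, max_eq_right hce]) intervalIntegrable_const hf'i
  simpa using this

noncomputable def companionKernel (a b x t : ℝ) : ℝ :=
  if t ≤ x then t - a else if t ≤ a + b - x then t - (a + b) / 2 else t - b

section CompanionKernel

variable {a b x : ℝ}

theorem intervalIntegrable_and_integral_comp_companionKernel (hax : a ≤ x)
    (hxm : x ≤ (a + b) / 2) {Φ : ℝ → ℝ → ℝ}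
    (hΦ : ∀ w, ContinuousOn (fun t => Φ t (t - w)) (Icc a b)) :
    IntervalIntegrable (fun t => Φ t (companionKernel a b x t)) volume a b ∧
      ∫ t in a..b, Φ t (companionKernel a b x t) =
        (∫ t in a..x, Φ t (t - a)) + (∫ t in x..a + b - x, Φ t (t - (a + b) / 2)) +
          ∫ t in a + b - x..b, Φ t (t - b) := by
  have piece : ∀ c e w, a ≤ c → c ≤ e → e ≤ b →
      (∀ t ∈ Ioo c e, companionKernel a b x t = t - w) →
      IntervalIntegrable (fun t => Φ t (companionKernel a b x t)) volume c e ∧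
        ∫ t in c..e, Φ t (companionKernel a b x t) = ∫ t in c..e, Φ t (t - w) := by
    intro c e w hac hce heb hP
    have heq : EqOn (fun t => Φ t (t - w)) (fun t => Φ t (companionKernel a b x t)) (uIoo c e) := by
      rw [uIoo_of_le hce]
      intro t ht
      simp only [hP t ht]
    exact ⟨(((hΦ w).mono (Icc_subset_Icc hac heb)).intervalIntegrable_of_Icc hce).congr_uIoo heq,
      (intervalIntegral.integral_congr_uIoo heq).symm⟩
  obtain ⟨hi₁, he₁⟩ := piece a x a le_rfl hax (by linarith) fun t ht => by
    simp [companionKernel, ht.2.le]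
  obtain ⟨hi₂, he₂⟩ := piece x (a + b - x) ((a + b) / 2) hax (by linarith) (by linarith)
    fun t ht => by simp [companionKernel, not_le.2 ht.1, ht.2.le]
  obtain ⟨hi₃, he₃⟩ := piece (a + b - x) b b (by linarith) (by linarith) le_rfl fun t ht => by
    simp [companionKernel, not_le.2 ht.1, not_le.2 (lt_of_le_of_lt (by linarith) ht.1 : x < t)]
  refine ⟨(hi₁.trans hi₂).trans hi₃, ?_⟩
  rw [← intervalIntegral.integral_add_adjacent_intervals (hi₁.trans hi₂) hi₃,
    ← intervalIntegral.integral_add_adjacent_intervals hi₁ hi₂, he₁, he₂, he₃]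

theorem integral_companionKernel_sq (hax : a ≤ x) (hxm : x ≤ (a + b) / 2) :
    ∫ t in a..b, companionKernel a b x t ^ 2
      = (b - a) * ((b - a) ^ 2 / 48 + (x - (3 * a + b) / 4) ^ 2) := by
  have hpiece : ∀ c e w : ℝ, ∫ t in c..e, (t - w) ^ 2 = ((e - w) ^ 3 - (c - w) ^ 3) / 3 := by
    intro c e w
    simp only [intervalIntegral.integral_comp_sub_right (fun t => t ^ 2), integral_pow]
    ring
  rw [(intervalIntegrable_and_integral_comp_companionKernel hax hxm (Φ := fun _ p => p ^ 2)
    fun w => by fun_prop).2, hpiece, hpiece, hpiece]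
  ring

theorem integral_companionKernel_mul_deriv (hax : a ≤ x) (hxm : x ≤ (a + b) / 2)
    {f f' : ℝ → ℝ} (hf : ContinuousOn f (Icc a b)) (hf'c : ContinuousOn f' (Icc a b))
    (hf' : ∀ t ∈ Ioo a b, HasDerivAt f (f' t) t) :
    ∫ t in a..b, companionKernel a b x t * f' t
      = (b - a) / 2 * (f x + f (a + b - x)) - ∫ t in a..b, f t := by
  have ibp : ∀ c e w, a ≤ c → c ≤ e → e ≤ b → ∫ t in c..e, (t - w) * f' t
      = (e - w) * f e - (c - w) * f c - ∫ t in c..e, f t := fun c e w hac hce heb =>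
    integral_sub_mul_deriv_eq w hce (hf.mono (Icc_subset_Icc hac heb))
      (fun t ht => hf' t ⟨hac.trans_lt ht.1, ht.2.trans_le heb⟩)
      ((hf'c.mono (Icc_subset_Icc hac heb)).intervalIntegrable_of_Icc hce)
  have hfi : ∀ c e, a ≤ c → c ≤ e → e ≤ b → IntervalIntegrable f volume c e :=
    fun c e hac hce heb => (hf.mono (Icc_subset_Icc hac heb)).intervalIntegrable_of_Icc hce
  rw [(intervalIntegrable_and_integral_comp_companionKernel hax hxm (Φ := fun t p => p * f' t)
    fun w => by fun_prop).2, ibp a x a le_rfl hax (by linarith),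
    ibp x (a + b - x) _ hax (by linarith) (by linarith), ibp (a + b - x) b b (by linarith)
    (by linarith) le_rfl, ← intervalIntegral.integral_add_adjacent_intervals
    (hfi a x le_rfl hax (by linarith)) (hfi x b hax (by linarith) le_rfl),
    ← intervalIntegral.integral_add_adjacent_intervals (hfi x (a + b - x) hax (by linarith)
    (by linarith)) (hfi (a + b - x) b (by linarith) (by linarith) le_rfl)]
  ring

end CompanionKernel

theorem abs_companion_sub_integral_le {a b x : ℝ} (hax : a ≤ x) (hxm : x ≤ (a + b) / 2)
    {f f' : ℝ → ℝ} (hf : ContinuousOn f (Icc a b)) (hf'c : ContinuousOn f' (Icc a b))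
    (hf' : ∀ t ∈ Ioo a b, HasDerivAt f (f' t) t) :
    |(b - a) / 2 * (f x + f (a + b - x)) - ∫ t in a..b, f t|
      ≤ √((b - a) * ((b - a) ^ 2 / 48 + (x - (3 * a + b) / 4) ^ 2)) *
          √(∫ t in a..b, f' t ^ 2) := by
  have hab : a ≤ b := by linarith
  have hPf' := (intervalIntegrable_and_integral_comp_companionKernel hax hxm
    (Φ := fun t p => p * f' t) fun w => by fun_prop).1
  have hP2 := (intervalIntegrable_and_integral_comp_companionKernel hax hxm
    (Φ := fun _ p => p ^ 2) fun w => by fun_prop).1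
  have hf'2 : IntervalIntegrable (fun t => f' t ^ 2) volume a b :=
    (hf'c.pow 2).intervalIntegrable_of_Icc hab
  have hCS : (∫ t in a..b, companionKernel a b x t * f' t) ^ 2
      ≤ (∫ t in a..b, companionKernel a b x t ^ 2) * ∫ t in a..b, f' t ^ 2 := by
    simp only [intervalIntegral.integral_of_le hab]
    exact sq_integral_mul_le_mul_integral_sq hP2.1 hf'2.1 hPf'.1
  rw [← integral_companionKernel_mul_deriv hax hxm hf hf'c hf',
    ← integral_companionKernel_sq hax hxm,
    ← sqrt_mul (intervalIntegral.integral_nonneg hab fun t _ => sq_nonneg _)]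
  exact abs_le_sqrt hCS

theorem companion_ostrowski_second_deriv_L2_symmetric_general
    (a b : ℝ) (hab : a < b) (f f' f'' : ℝ → ℝ)
    (hcont : ContinuousOn f (Set.Icc a b))
    (hderiv : ∀ t ∈ Set.Ioo a b, HasDerivAt f (f' t) t)
    (hderiv2 : ∀ t ∈ Set.Ioo a b, HasDerivAt f' (f'' t) t)
    (hL2 : IntervalIntegrable (fun t => (f'' t) ^ 2) MeasureTheory.volume a b)
    (hsym : ∀ x ∈ Set.Icc a b, f (a + b - x) = f x) :
    ∀ x ∈ Set.Icc a ((a + b) / 2),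
      |f x - (1 / (b - a)) * ∫ t in a..b, f t|
        ≤ Real.sqrt (b - a) / Real.pi *
            Real.sqrt ((b - a) ^ 2 / 48 + (x - (3 * a + b) / 4) ^ 2) *
            Real.sqrt (∫ t in a..b, (f'' t) ^ 2) := by
  rintro x ⟨hax, hxm⟩
  have hm : (a + b) / 2 ∈ Ioo a b := ⟨by linarith, by linarith⟩
  obtain ⟨G, hGc, hGf'⟩ := exists_continuousOn_Icc_eqOn_Ioo_of_hasDerivAt hab hderiv2
    (intervalIntegrable_of_hasDerivAt_Ioo_of_sq hab.le hderiv2 hL2)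
  have hfG : ∀ t ∈ Ioo a b, HasDerivAt f (G t) t := fun t ht => hGf' ht ▸ hderiv t ht
  have hGf'' : ∀ t ∈ Ioo a b, HasDerivAt G (f'' t) t := fun t ht =>
    (hderiv2 t ht).congr_of_eventuallyEq (eventuallyEq_of_mem (Ioo_mem_nhds ht.1 ht.2) hGf')
  have hGm : G ((a + b) / 2) = 0 :=
    (hfG _ hm).eq_zero_of_eventually_comp_const_sub
      (eventually_of_mem (Ioo_mem_nhds hm.1 hm.2) fun t ht => hsym t (Ioo_subset_Icc_self ht))
  have hW := integral_sq_le_of_midpoint_eq_zero hab hGc hGf'' hL2 hGm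
  have hO := abs_companion_sub_integral_le hax hxm hcont hGc hfG
  rw [hsym x ⟨hax, by linarith⟩] at hO
  have hba : 0 < b - a := by linarith
  have hG2 : √(∫ t in a..b, G t ^ 2) ≤ (b - a) / π * √(∫ t in a..b, f'' t ^ 2) := by
    rw [← sqrt_sq (div_pos hba pi_pos).le, ← sqrt_mul (sq_nonneg _)]
    exact sqrt_le_sqrt hW
  rw [show f x - 1 / (b - a) * ∫ t in a..b, f t
      = ((b - a) / 2 * (f x + f x) - ∫ t in a..b, f t) / (b - a) by field_simp; ring,
    abs_div, abs_of_pos hba, div_le_iff₀ hba]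
  calc _ ≤ _ := hO
    _ ≤ √((b - a) * ((b - a) ^ 2 / 48 + (x - (3 * a + b) / 4) ^ 2)) *
          ((b - a) / π * √(∫ t in a..b, f'' t ^ 2)) := by gcongr
    _ = _ := by rw [sqrt_mul hba.le]; ring

/-- **Ostrowski type inequality for symmetric `f` with `f'' ∈ L²[a,b]`** (Corollary 2.8,
inequality (2.29)): if additionally `f (a + b - x) = f x` on `[a,b]`, then for all
`x ∈ [a, (a+b)/2]`,
`|f x - (1/(b-a)) ∫_a^b f| ≤ (√(b-a)/π) · √((b-a)²/48 + (x - (3a+b)/4)²) · ‖f''‖₂`. -/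
theorem companion_ostrowski_second_deriv_L2_symmetric
    (a b : ℝ) (hab : a < b) (f f' f'' : ℝ → ℝ)
    (hcont : ContinuousOn f (Set.Icc a b))
    (hderiv : ∀ t ∈ Set.Ioo a b, HasDerivAt f (f' t) t)
    (hderiv2 : ∀ t ∈ Set.Ioo a b, HasDerivAt f' (f'' t) t)
    (hcont2 : ContinuousOn f'' (Set.Ioo a b))
    (hL2 : IntervalIntegrable (fun t => (f'' t) ^ 2) MeasureTheory.volume a b)
    (hsym : ∀ x ∈ Set.Icc a b, f (a + b - x) = f x) :
    ∀ x ∈ Set.Icc a ((a + b) / 2),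
      |f x - (1 / (b - a)) * ∫ t in a..b, f t|
        ≤ Real.sqrt (b - a) / Real.pi *
            Real.sqrt ((b - a) ^ 2 / 48 + (x - (3 * a + b) / 4) ^ 2) *
            Real.sqrt (∫ t in a..b, (f'' t) ^ 2) :=
  companion_ostrowski_second_deriv_L2_symmetric_general a b hab f f' f'' hcont hderiv hderiv2 hL2
    hsym
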